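/- arXiv:1405.4473 — 7 statements merged into one kernel-verified Lean document; each statement's English description precedes it below -/
import Mathlib

section
/- Let R be a commutative ring and 𝔞 an ideal of R. The R-module R/𝔞 is monoform (i.e., for every nonzero submodule L of R/𝔞, no nonzero submodule of R/𝔞 is isomorphic to a submodule of (R/𝔞)/L) if and only if 𝔞 is a prime ideal. -/
/-!
If `𝔞` is prime, `R ⧸ 𝔞` is a domain, so every nonzero submodule of it has annihilator
contained in `𝔞`; a nonzero `L` contains some `c ∉ 𝔞`, and `c` kills `(R ⧸ 𝔞) ⧸ L`.
Since isomorphic modules have equal annihilators, no nonzero submodule of `R ⧸ 𝔞` embeds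
into `(R ⧸ 𝔞) ⧸ L`.

Conversely, for `x ∉ 𝔞` let `J = 𝔞 : x`, the torsion ideal of `x̄`. By the third isomorphism
theorem `(R ⧸ 𝔞) ⧸ (J ⧸ 𝔞) ≃ R ⧸ J ≃ R ∙ x̄ ≠ 0`, so monoformness forces `J = 𝔞`, i.e. `xy ∈ 𝔞`
implies `y ∈ 𝔞`.
-/

/-- A module `H` over a ring `R` is *monoform* if it is nonzero and for each nonzero
submodule `L` of `H`, no nonzero submodule of `H` is isomorphic to a submodule of `H ⧸ L`. -/
def IsMonoform (R : Type*) [Ring R] (H : Type*) [AddCommGroup H] [Module R H] : Prop :=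
  Nontrivial H ∧
    ∀ L : Submodule R H, L ≠ ⊥ →
      ¬∃ (N : Submodule R H) (N' : Submodule R (H ⧸ L)), N ≠ ⊥ ∧ Nonempty (N ≃ₗ[R] N')

namespace IsMonoform

variable {R : Type*} [Ring R] {H : Type*} [AddCommGroup H] [Module R H]

theorem eq_bot_of_quotient_equiv (hH : IsMonoform R H) {L N : Submodule R H} (hN : N ≠ ⊥)
    (e : (H ⧸ L) ≃ₗ[R] N) : L = ⊥ :=
  by_contra fun hL ↦ hH.2 L hL ⟨N, ⊤, hN, ⟨e.symm ≪≫ₗ Submodule.topEquiv.symm⟩⟩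

end IsMonoform

theorem IsMonoform.of_not_annihilator_quotient_le {R : Type*} [CommRing R] {H : Type*}
    [AddCommGroup H] [Module R H] [Nontrivial H]
    (h : ∀ L N : Submodule R H, L ≠ ⊥ → N ≠ ⊥ →
      ¬Module.annihilator R (H ⧸ L) ≤ Module.annihilator R N) :
    IsMonoform R H := by
  refine ⟨inferInstance, fun L hL ⟨N, N', hN, ⟨e⟩⟩ ↦ h L N hL hN ?_⟩
  calc Module.annihilator R (H ⧸ L)
      ≤ Module.annihilator R N' := N'.subtype.annihilator_le_of_injective Subtype.val_injective
    _ = Module.annihilator R N := e.annihilator_eq.symm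

namespace Ideal

variable {R : Type*} [CommRing R] {𝔞 : Ideal R}

theorem annihilator_le_of_isPrime (h𝔞 : 𝔞.IsPrime) {N : Submodule R (R ⧸ 𝔞)} (hN : N ≠ ⊥) :
    Module.annihilator R N ≤ 𝔞 := by
  intro r hr
  obtain ⟨n, hnN, hn⟩ := N.ne_bot_iff.mp hN
  obtain ⟨s, rfl⟩ := Ideal.Quotient.mk_surjective n
  have hrs : r * s ∈ 𝔞 := by
    simpa [← Ideal.Quotient.eq_zero_iff_mem, Algebra.smul_def] using
      congrArg Subtype.val (Module.mem_annihilator.mp hr ⟨_, hnN⟩)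
  exact (h𝔞.mem_or_mem hrs).resolve_right (mt Ideal.Quotient.eq_zero_iff_mem.mpr hn)

theorem not_annihilator_quotient_le {L : Submodule R (R ⧸ 𝔞)} (hL : L ≠ ⊥) :
    ¬Module.annihilator R ((R ⧸ 𝔞) ⧸ L) ≤ 𝔞 := by
  obtain ⟨z, hzL, hz⟩ := L.ne_bot_iff.mp hL
  obtain ⟨c, rfl⟩ := Ideal.Quotient.mk_surjective z
  refine fun hle ↦ hz (Ideal.Quotient.eq_zero_iff_mem.mpr (hle ?_))
  rw [Submodule.annihilator_quotient, Submodule.mem_colon]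
  rintro p -
  obtain ⟨s, rfl⟩ := Ideal.Quotient.mk_surjective p
  have hswap : c • Ideal.Quotient.mk 𝔞 s = s • Ideal.Quotient.mk 𝔞 c := by
    simp [Algebra.smul_def, mul_comm]
  exact hswap ▸ L.smul_mem s hzL

theorem le_torsionOf_quotient (x : R ⧸ 𝔞) : 𝔞 ≤ torsionOf R (R ⧸ 𝔞) x := fun r hr ↦ by
  simp [mem_torsionOf_iff, Algebra.smul_def, Ideal.Quotient.eq_zero_iff_mem.mpr hr]

noncomputable def quotientMapTorsionOfEquivSpanSingleton (x : R ⧸ 𝔞) :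
    ((R ⧸ 𝔞) ⧸ Submodule.map 𝔞.mkQ (torsionOf R (R ⧸ 𝔞) x)) ≃ₗ[R] R ∙ x :=
  (Submodule.quotientQuotientEquivQuotient 𝔞 (torsionOf R (R ⧸ 𝔞) x)
    (le_torsionOf_quotient x)).trans (quotTorsionOfEquivSpanSingleton R (R ⧸ 𝔞) x)

theorem isPrime_of_isMonoform (h : IsMonoform R (R ⧸ 𝔞)) : 𝔞.IsPrime := by
  have : Nontrivial (R ⧸ 𝔞) := h.1
  refine ⟨Ideal.Quotient.nontrivial_iff.mp this, fun {x y} hxy ↦ ?_⟩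
  refine or_iff_not_imp_left.mpr fun hx ↦ ?_
  have hspan : (R ∙ Ideal.Quotient.mk 𝔞 x) ≠ ⊥ := by
    simpa [Ideal.Quotient.eq_zero_iff_mem] using hx
  have htors : torsionOf R (R ⧸ 𝔞) (Ideal.Quotient.mk 𝔞 x) ≤ 𝔞 := by
    simpa only [Submodule.ker_mkQ] using LinearMap.le_ker_iff_map.mpr <|
      h.eq_bot_of_quotient_equiv hspan (quotientMapTorsionOfEquivSpanSingleton _)
  refine htors ?_
  simpa [mem_torsionOf_iff, Algebra.smul_def, ← map_mul, mul_comm,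
    Ideal.Quotient.eq_zero_iff_mem] using hxy

theorem isMonoform_of_isPrime (h : 𝔞.IsPrime) : IsMonoform R (R ⧸ 𝔞) :=
  have : Nontrivial (R ⧸ 𝔞) := Ideal.Quotient.nontrivial_iff.mpr h.ne_top
  IsMonoform.of_not_annihilator_quotient_le fun _ _ hL hN hle ↦
    not_annihilator_quotient_le hL (hle.trans (annihilator_le_of_isPrime h hN))

end Ideal

/-- For a commutative ring `R` and an ideal `𝔞`, the `R`-module `R ⧸ 𝔞` is monoform
if and only if `𝔞` is a prime ideal. -/
theorem quotient_isMonoform_iff_isPrime (R : Type*) [CommRing R] (𝔞 : Ideal R) :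
    IsMonoform R (R ⧸ 𝔞) ↔ 𝔞.IsPrime :=
  ⟨Ideal.isPrime_of_isMonoform, Ideal.isMonoform_of_isPrime⟩
end

section
/- Every nonzero noetherian module over a ring has a monoform submodule. -/
/-- Key step: if no nonzero submodule of `M` is monoform, then any nonzero partial
endomorphism of `M` can be refined to one with strictly larger kernel. -/
lemma monoform_step {R M : Type*} [Ring R] [AddCommGroup M] [Module R M]
    (hcon : ∀ N : Submodule R M, N ≠ ⊥ → ¬ IsMonoform R N)
    (D : Submodule R M) (g : D →ₗ[R] M) (hg : g ≠ 0) :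
    ∃ (D' : Submodule R M) (g' : D' →ₗ[R] M), g' ≠ 0 ∧
      (LinearMap.ker g).map D.subtype < (LinearMap.ker g').map D'.subtype := by
  set G : Submodule R M := LinearMap.range g with hGdef
  have hG : G ≠ ⊥ := by rwa [hGdef, Ne, LinearMap.range_eq_bot]
  have hnt : Nontrivial G := Submodule.nontrivial_iff_ne_bot.2 hG
  have hmono := hcon G hG
  rw [IsMonoform] at hmono
  push_neg at hmono
  obtain ⟨L, hL, N, N', hN, ⟨e⟩⟩ := hmono hnt
  -- D₂ : preimage of N' in G
  set D₂ : Submodule R G := N'.comap L.mkQ with hD₂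
  have hsub : ∀ x : D₂, (L.mkQ ∘ₗ D₂.subtype) x ∈ N' := fun x => x.2
  set h₂ : D₂ →ₗ[R] G :=
    N.subtype ∘ₗ e.symm.toLinearMap ∘ₗ LinearMap.codRestrict N' (L.mkQ ∘ₗ D₂.subtype) hsub
    with hh₂
  set gR : D →ₗ[R] G := g.rangeRestrict with hgR
  set Ds : Submodule R D := D₂.comap gR with hDs
  have hle : Ds.map D.subtype ≤ D := Submodule.map_subtype_le D Ds
  have hmem : ∀ x : (Ds.map D.subtype), Submodule.inclusion hle x ∈ Ds := by
    rintro ⟨x, hx⟩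
    obtain ⟨y, hy, rfl⟩ := hx
    have : Submodule.inclusion hle ⟨D.subtype y, ⟨y, hy, rfl⟩⟩ = y := Subtype.ext rfl
    rw [this]; exact hy
  set r : (Ds.map D.subtype) →ₗ[R] Ds :=
    LinearMap.codRestrict Ds (Submodule.inclusion hle) hmem with hr
  set gR' : Ds →ₗ[R] D₂ := gR.restrict (fun x hx => hx) with hgR'
  set g' : (Ds.map D.subtype) →ₗ[R] M := G.subtype ∘ₗ h₂ ∘ₗ gR' ∘ₗ r with hg'
  have key : ∀ (w : D) (hw : w ∈ Ds), g' ⟨w.1, ⟨w, hw, rfl⟩⟩ = (h₂ ⟨gR w, hw⟩ : M) :=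
    fun w hw => rfl
  refine ⟨Ds.map D.subtype, g', ?_, ?_⟩
  · -- g' ≠ 0
    have hNnt : Nontrivial N := Submodule.nontrivial_iff_ne_bot.2 hN
    obtain ⟨n, hn0⟩ := exists_ne (0 : N)
    obtain ⟨z, hz⟩ := L.mkQ_surjective (e n).1
    have hzD₂ : z ∈ D₂ := by
      show L.mkQ z ∈ N'
      rw [hz]; exact (e n).2
    have hcomp : h₂ ⟨z, hzD₂⟩ = (n : G) := by
      have h1 : (LinearMap.codRestrict N' (L.mkQ ∘ₗ D₂.subtype) hsub) ⟨z, hzD₂⟩ = e n :=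
        Subtype.ext hz
      simp only [hh₂, LinearMap.comp_apply, h1, LinearMap.coe_comp, Function.comp_apply]
      rw [show e.symm.toLinearMap (e n) = n from e.symm_apply_apply n]
      rfl
    obtain ⟨w, hw⟩ := g.surjective_rangeRestrict z
    have hwDs : w ∈ Ds := by show gR w ∈ D₂; rw [hw]; exact hzD₂
    intro h0
    have := key w hwDs
    rw [h0] at this
    have h2 : (⟨gR w, hwDs⟩ : D₂) = ⟨z, hzD₂⟩ := Subtype.ext hw
    rw [h2, hcomp] at this
    have : (n : G) = 0 := by
      apply_fun G.subtype using Subtype.coe_injective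
      simpa using this.symm
    exact hn0 (by apply_fun N.subtype using Subtype.coe_injective; simpa using this)
  · rw [SetLike.lt_iff_le_and_exists]
    constructor
    · rintro m ⟨x, hx, rfl⟩
      have hx0 : g x = 0 := hx
      have hgRx : gR x = 0 := Subtype.ext hx0
      have hxDs : x ∈ Ds := by show gR x ∈ D₂; rw [hgRx]; exact D₂.zero_mem
      refine ⟨⟨x.1, ⟨x, hxDs, rfl⟩⟩, ?_, rfl⟩
      show g' _ = 0
      rw [key x hxDs]
      have : (⟨gR x, hxDs⟩ : D₂) = 0 := Subtype.ext hgRx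
      rw [this, map_zero]; rfl
    · -- strict part: a nonzero element of L gives a new kernel element
      have hLnt : Nontrivial L := Submodule.nontrivial_iff_ne_bot.2 hL
      obtain ⟨l, hl0⟩ := exists_ne (0 : L)
      have hzD₂ : (l : G) ∈ D₂ := by
        show L.mkQ (l : G) ∈ N'
        rw [show L.mkQ (l : G) = 0 from (Submodule.Quotient.mk_eq_zero L).2 l.2]
        exact N'.zero_mem
      have hcomp : h₂ ⟨(l : G), hzD₂⟩ = 0 := by
        have h1 : (LinearMap.codRestrict N' (L.mkQ ∘ₗ D₂.subtype) hsub) ⟨(l : G), hzD₂⟩ = 0 :=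
          Subtype.ext ((Submodule.Quotient.mk_eq_zero L).2 l.2)
        simp only [hh₂, LinearMap.comp_apply, h1, map_zero]
      obtain ⟨w, hw⟩ := g.surjective_rangeRestrict (l : G)
      have hwDs : w ∈ Ds := by show gR w ∈ D₂; rw [hw]; exact hzD₂
      refine ⟨w.1, ⟨⟨w.1, ⟨w, hwDs, rfl⟩⟩, ?_, rfl⟩, ?_⟩
      · show g' _ = 0
        rw [key w hwDs]
        have h2 : (⟨gR w, hwDs⟩ : D₂) = ⟨(l : G), hzD₂⟩ := Subtype.ext hw
        rw [h2, hcomp]; rfl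
      · rintro ⟨x, hxker, hx1⟩
        have hxw : x = w := Subtype.ext hx1
        have : g w = 0 := by rw [← hxw]; exact hxker
        have hgRw : gR w = 0 := Subtype.ext this
        rw [hgRw] at hw
        exact hl0 (by apply_fun L.subtype using Subtype.coe_injective; simpa using hw.symm)

/-- Every nonzero noetherian module over a ring has a monoform submodule. -/
theorem exists_monoform_submodule (R : Type*) [Ring R] (M : Type*) [AddCommGroup M]
    [Module R M] [IsNoetherian R M] [Nontrivial M] :
    ∃ N : Submodule R M, N ≠ ⊥ ∧ IsMonoform R N := by
  by_contra hcon
  push_neg at hcon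
  replace hcon : ∀ N : Submodule R M, N ≠ ⊥ → ¬ IsMonoform R N := fun N h => hcon N h
  -- pairs (domain, nonzero partial endomorphism)
  let P := {p : (D : Submodule R M) × (D →ₗ[R] M) // p.2 ≠ 0}
  have H : ∀ p : P, ∃ (D' : Submodule R M) (g' : D' →ₗ[R] M), g' ≠ 0 ∧
      (LinearMap.ker p.1.2).map p.1.1.subtype < (LinearMap.ker g').map D'.subtype :=
    fun p => monoform_step hcon p.1.1 p.1.2 p.2
  choose D' g' hg' hK using H
  let step : P → P := fun p => ⟨⟨D' p, g' p⟩, hg' p⟩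
  have hg0 : ((⊤ : Submodule R M).subtype : (⊤ : Submodule R M) →ₗ[R] M) ≠ 0 := by
    intro h
    obtain ⟨x, hx⟩ := exists_ne (0 : M)
    have : (⊤ : Submodule R M).subtype ⟨x, trivial⟩ = 0 := by rw [h]; rfl
    exact hx this
  let p₀ : P := ⟨⟨⊤, (⊤ : Submodule R M).subtype⟩, hg0⟩
  let K : P → Submodule R M := fun p => (LinearMap.ker p.1.2).map p.1.1.subtype
  let seq : ℕ → P := fun n => step^[n] p₀
  have hmono : StrictMono (K ∘ seq) := by
    apply strictMono_nat_of_lt_succ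
    intro n
    show K (seq n) < K (seq (n + 1))
    have : seq (n + 1) = step (seq n) := Function.iterate_succ_apply' step n p₀
    rw [this]
    exact hK (seq n)
  obtain ⟨n, hn⟩ := monotone_stabilizes_iff_noetherian.mpr inferInstance
    ⟨K ∘ seq, hmono.monotone⟩
  exact (hmono (Nat.lt_succ_self n)).ne (hn (n + 1) (Nat.le_succ n))
end

section
/- Let Λ be a ring. The map sending a prelocalizing subcategory 𝒴 of Mod Λ (a full subcategory closed under submodules, quotients, and arbitrary direct sums) to the set {L ⊆ Λ right ideal : Λ/L ∈ 𝒴} is a bijection onto the set of prelocalizing filters of right ideals of Λ. The inverse sends a filter ℱ to {M : Ann(x) ∈ ℱ for every x ∈ M}. -/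
open CategoryTheory DirectSum

universe u

variable (Λ : Type u) [Ring Λ]

/-- A *prelocalizing subcategory* of the category of right `Λ`-modules (modeled as
`Λᵐᵒᵖ`-modules): a class of modules closed under submodules, quotient modules, and
arbitrary direct sums. -/
def IsPrelocSubcat (P : Set (ModuleCat.{u} Λᵐᵒᵖ)) : Prop :=
  (∀ (M N : ModuleCat.{u} Λᵐᵒᵖ) (f : N ⟶ M), Mono f → M ∈ P → N ∈ P) ∧
  (∀ (M N : ModuleCat.{u} Λᵐᵒᵖ) (f : M ⟶ N), Epi f → M ∈ P → N ∈ P) ∧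
  (∀ (ι : Type u) (M : ι → ModuleCat.{u} Λᵐᵒᵖ), (∀ i, M i ∈ P) →
    ModuleCat.of Λᵐᵒᵖ (⨁ i, (M i : Type u)) ∈ P)

/-- Left multiplication by `a` on `Λ`, as an endomorphism of `Λ` as a right `Λ`-module.
The preimage of a right ideal `L` under this map is `a⁻¹L = {b | a * b ∈ L}`. -/
def leftMulMap (a : Λ) : Λ →ₗ[Λᵐᵒᵖ] Λ where
  toFun b := a * b
  map_add' b c := mul_add a b c
  map_smul' r b := by
    simp only [MulOpposite.smul_eq_mul_unop, RingHom.id_apply]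
    exact (mul_assoc a b r.unop).symm

/-- A *prelocalizing filter* of right ideals of `Λ`: a set of right ideals containing `Λ`,
upward closed, closed under finite intersections, and such that `a⁻¹L ∈ ℱ` for each
`L ∈ ℱ` and `a ∈ Λ`. -/
def IsPrelocFilter (F : Set (Submodule Λᵐᵒᵖ Λ)) : Prop :=
  ⊤ ∈ F ∧
  (∀ I J : Submodule Λᵐᵒᵖ Λ, I ∈ F → I ≤ J → J ∈ F) ∧
  (∀ I J : Submodule Λᵐᵒᵖ Λ, I ∈ F → J ∈ F → I ⊓ J ∈ F) ∧
  (∀ I ∈ F, ∀ a : Λ, Submodule.comap (leftMulMap Λ a) I ∈ F)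

/-- The filter `{L | Λ/L ∈ 𝒴}` associated to a prelocalizing subcategory `𝒴`. -/
def toFilter (P : Set (ModuleCat.{u} Λᵐᵒᵖ)) : Set (Submodule Λᵐᵒᵖ Λ) :=
  {L | ModuleCat.of Λᵐᵒᵖ (Λ ⧸ L) ∈ P}

/-- The map `Λ → M`, `a ↦ x·a`, for a right `Λ`-module `M` and `x : M`; its kernel is the
annihilator right ideal `Ann(x)`. -/
def annMap {M : Type u} [AddCommGroup M] [Module Λᵐᵒᵖ M] (x : M) : Λ →ₗ[Λᵐᵒᵖ] M where
  toFun a := MulOpposite.op a • x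
  map_add' a b := by simp [add_smul]
  map_smul' r a := by
    simp only [MulOpposite.smul_eq_mul_unop, RingHom.id_apply]
    rw [MulOpposite.op_mul, MulOpposite.op_unop, mul_smul]

/-- The subcategory `{M | Ann(x) ∈ ℱ for every x ∈ M}` associated to a filter `ℱ`. -/
def toSubcat (F : Set (Submodule Λᵐᵒᵖ Λ)) : Set (ModuleCat.{u} Λᵐᵒᵖ) :=
  {M | ∀ x : M, LinearMap.ker (annMap Λ x) ∈ F}

/-!
Λ/(I ∩ J) embeds in Λ/I ⊕ Λ/J, and b ↦ ab embeds Λ/a⁻¹L in Λ/L, so a prelocalizing class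
yields a prelocalizing filter. Conversely, annihilators can only grow along module maps (and are
preserved by injective ones), and an element of a direct sum is killed by the finite intersection
of the annihilators of its components. The constructions are mutually inverse because
Λ/Ann(x) ≅ xΛ, every module is a quotient of ⨁ₓ xΛ, and the class of b in Λ/L has annihilator b⁻¹L.
-/

open LinearMap (ker)

variable {Λ}
variable {M N : Type u} [AddCommGroup M] [Module Λᵐᵒᵖ M] [AddCommGroup N] [Module Λᵐᵒᵖ N]

@[simp]
theorem annMap_apply (x : M) (a : Λ) : annMap Λ x a = MulOpposite.op a • x := rfl

theorem leftMulMap_one : leftMulMap Λ 1 = LinearMap.id :=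
  LinearMap.ext one_mul

theorem annMap_map (f : M →ₗ[Λᵐᵒᵖ] N) (x : M) : annMap Λ (f x) = f ∘ₗ annMap Λ x := by
  ext
  simp

theorem ker_annMap_mk (L : Submodule Λᵐᵒᵖ Λ) (b : Λ) :
    ker (annMap Λ (Submodule.Quotient.mk b : Λ ⧸ L)) = L.comap (leftMulMap Λ b) := by
  ext a
  simp [← Submodule.Quotient.mk_smul, Submodule.Quotient.mk_eq_zero, leftMulMap]

section Subcat

variable {P : Set (ModuleCat.{u} Λᵐᵒᵖ)}

theorem IsPrelocSubcat.mem_of_injective (hP : IsPrelocSubcat Λ P) (f : N →ₗ[Λᵐᵒᵖ] M)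
    (hf : Function.Injective f) (hM : ModuleCat.of Λᵐᵒᵖ M ∈ P) : ModuleCat.of Λᵐᵒᵖ N ∈ P :=
  hP.1 _ _ (ModuleCat.ofHom f) ((ModuleCat.mono_iff_injective _).2 hf) hM

theorem IsPrelocSubcat.mem_of_surjective (hP : IsPrelocSubcat Λ P) (f : M →ₗ[Λᵐᵒᵖ] N)
    (hf : Function.Surjective f) (hM : ModuleCat.of Λᵐᵒᵖ M ∈ P) : ModuleCat.of Λᵐᵒᵖ N ∈ P :=
  hP.2.1 _ _ (ModuleCat.ofHom f) ((ModuleCat.epi_iff_surjective _).2 hf) hM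

theorem IsPrelocSubcat.mem_of_subsingleton (hP : IsPrelocSubcat Λ P) [Subsingleton M] :
    ModuleCat.of Λᵐᵒᵖ M ∈ P :=
  hP.mem_of_injective (0 : M →ₗ[Λᵐᵒᵖ] ⨁ i : PEmpty.{u + 1}, (i.elim : ModuleCat Λᵐᵒᵖ))
    (Function.injective_of_subsingleton _) (hP.2.2 _ _ fun i => i.elim)

theorem IsPrelocSubcat.pi_mem (hP : IsPrelocSubcat Λ P) {ι : Type u} [Finite ι]
    {M : ι → Type u} [∀ i, AddCommGroup (M i)] [∀ i, Module Λᵐᵒᵖ (M i)]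
    (hM : ∀ i, ModuleCat.of Λᵐᵒᵖ (M i) ∈ P) : ModuleCat.of Λᵐᵒᵖ (∀ i, M i) ∈ P := by
  have := Fintype.ofFinite ι
  exact hP.mem_of_surjective (DirectSum.linearEquivFunOnFintype Λᵐᵒᵖ ι M).toLinearMap
    (LinearEquiv.surjective _) (hP.2.2 ι _ hM)

theorem IsPrelocSubcat.quotient_ker_mem (hP : IsPrelocSubcat Λ P) (f : N →ₗ[Λᵐᵒᵖ] M)
    (hM : ModuleCat.of Λᵐᵒᵖ M ∈ P) : ModuleCat.of Λᵐᵒᵖ (N ⧸ ker f) ∈ P :=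
  hP.mem_of_injective ((ker f).liftQ f le_rfl)
    (LinearMap.ker_eq_bot.1 (Submodule.ker_liftQ_eq_bot _ _ _ le_rfl)) hM

theorem IsPrelocSubcat.quotient_mem_of_le (hP : IsPrelocSubcat Λ P) {p q : Submodule Λᵐᵒᵖ M}
    (hpq : p ≤ q) (hp : ModuleCat.of Λᵐᵒᵖ (M ⧸ p) ∈ P) : ModuleCat.of Λᵐᵒᵖ (M ⧸ q) ∈ P :=
  hP.mem_of_surjective (Submodule.factor hpq) (Submodule.factor_surjective hpq) hp

theorem IsPrelocSubcat.quotient_comap_mem (hP : IsPrelocSubcat Λ P) (f : N →ₗ[Λᵐᵒᵖ] M)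
    {q : Submodule Λᵐᵒᵖ M} (hq : ModuleCat.of Λᵐᵒᵖ (M ⧸ q) ∈ P) :
    ModuleCat.of Λᵐᵒᵖ (N ⧸ q.comap f) ∈ P := by
  have h := hP.quotient_ker_mem (q.mkQ ∘ₗ f) hq
  rwa [LinearMap.ker_comp, Submodule.ker_mkQ] at h

theorem IsPrelocSubcat.quotient_iInf_mem (hP : IsPrelocSubcat Λ P) {ι : Type u} [Finite ι]
    (p : ι → Submodule Λᵐᵒᵖ M) (hp : ∀ i, ModuleCat.of Λᵐᵒᵖ (M ⧸ p i) ∈ P) :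
    ModuleCat.of Λᵐᵒᵖ (M ⧸ ⨅ i, p i) ∈ P := by
  have hker : ker (LinearMap.pi fun i => (p i).mkQ) = ⨅ i, p i := by
    simp only [LinearMap.ker_pi, Submodule.ker_mkQ]
  rw [← hker]
  exact hP.quotient_ker_mem _ (hP.pi_mem hp)

theorem IsPrelocSubcat.quotient_inf_mem (hP : IsPrelocSubcat Λ P) {p q : Submodule Λᵐᵒᵖ M}
    (hp : ModuleCat.of Λᵐᵒᵖ (M ⧸ p) ∈ P) (hq : ModuleCat.of Λᵐᵒᵖ (M ⧸ q) ∈ P) :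
    ModuleCat.of Λᵐᵒᵖ (M ⧸ p ⊓ q) ∈ P := by
  have hpq : ⨅ b : ULift.{u} Bool, cond b.down p q = p ⊓ q := by
    rw [iInf_ulift, iInf_bool_eq]
    rfl
  rw [← hpq]
  exact hP.quotient_iInf_mem _ (by rintro ⟨_ | _⟩ <;> assumption)

theorem IsPrelocSubcat.isPrelocFilter_toFilter (hP : IsPrelocSubcat Λ P) :
    IsPrelocFilter Λ (toFilter Λ P) := by
  have : Subsingleton (Λ ⧸ (⊤ : Submodule Λᵐᵒᵖ Λ)) := Submodule.Quotient.subsingleton_iff.2 rfl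
  exact ⟨hP.mem_of_subsingleton, fun _ _ hI hIJ => hP.quotient_mem_of_le hIJ hI,
    fun _ _ => hP.quotient_inf_mem, fun _ hL a => hP.quotient_comap_mem (leftMulMap Λ a) hL⟩

theorem IsPrelocSubcat.mem_iff_forall_quotient_ker_annMap_mem (hP : IsPrelocSubcat Λ P) :
    ModuleCat.of Λᵐᵒᵖ M ∈ P ↔ ∀ x : M, ModuleCat.of Λᵐᵒᵖ (Λ ⧸ ker (annMap Λ x)) ∈ P := by
  refine ⟨fun hM x => hP.quotient_ker_mem _ hM, fun h => ?_⟩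
  classical
  refine hP.mem_of_surjective
    (DirectSum.toModule Λᵐᵒᵖ M M fun x => (ker (annMap Λ x)).liftQ (annMap Λ x) le_rfl)
    (fun x => ⟨DirectSum.lof Λᵐᵒᵖ M _ x (Submodule.Quotient.mk 1), ?_⟩) (hP.2.2 M _ h)
  simp

theorem IsPrelocSubcat.toSubcat_toFilter (hP : IsPrelocSubcat Λ P) :
    toSubcat Λ (toFilter Λ P) = P :=
  Set.ext fun M => (hP.mem_iff_forall_quotient_ker_annMap_mem (M := M)).symm

end Subcat

section Filter

variable {F : Set (Submodule Λᵐᵒᵖ Λ)}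

theorem ker_annMap_le_ker_annMap_map (f : M →ₗ[Λᵐᵒᵖ] N) (x : M) :
    ker (annMap Λ x) ≤ ker (annMap Λ (f x)) := by
  rw [annMap_map]
  exact LinearMap.ker_le_ker_comp _ _

theorem ker_annMap_map_of_injective {f : M →ₗ[Λᵐᵒᵖ] N} (hf : Function.Injective f) (x : M) :
    ker (annMap Λ (f x)) = ker (annMap Λ x) := by
  rw [annMap_map, LinearMap.ker_comp_of_ker_eq_bot _ (LinearMap.ker_eq_bot.2 hf)]

theorem finsetInf_ker_annMap_le {ι : Type u} [DecidableEq ι] {M : ι → Type u}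
    [∀ i, AddCommGroup (M i)] [∀ i, Module Λᵐᵒᵖ (M i)] [∀ i (y : M i), Decidable (y ≠ 0)]
    (x : ⨁ i, M i) :
    x.support.inf (fun i => ker (annMap Λ (x i))) ≤ ker (annMap Λ x) := by
  intro a ha
  rw [Submodule.mem_finsetInf] at ha
  refine LinearMap.mem_ker.2 (DFinsupp.ext fun i => ?_)
  rw [annMap_apply, DirectSum.smul_apply]
  by_cases hi : i ∈ x.support
  · exact ha i hi
  · rw [DFinsupp.notMem_support_iff.1 hi, smul_zero]
    rfl

theorem IsPrelocFilter.isPrelocSubcat_toSubcat (hF : IsPrelocFilter Λ F) :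
    IsPrelocSubcat Λ (toSubcat Λ F) := by
  refine ⟨fun M N f hf hM x => ?_, fun M N f hf hM y => ?_, fun ι M hM x => ?_⟩
  · rw [← ker_annMap_map_of_injective ((ModuleCat.mono_iff_injective f).1 hf) x]
    exact hM _
  · obtain ⟨x, rfl⟩ := (ModuleCat.epi_iff_surjective f).1 hf y
    exact hF.2.1 _ _ (hM x) (ker_annMap_le_ker_annMap_map f.hom x)
  · classical
    exact hF.2.1 _ _ (Finset.inf_mem F hF.1 (fun I hI J hJ => hF.2.2.1 I J hI hJ) _ _
      fun i _ => hM i _) (finsetInf_ker_annMap_le x)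

theorem IsPrelocFilter.toFilter_toSubcat (hF : IsPrelocFilter Λ F) :
    toFilter Λ (toSubcat Λ F) = F := by
  ext L
  refine ⟨fun h => ?_, fun hL x => ?_⟩
  · simpa [ker_annMap_mk, leftMulMap_one] using h (Submodule.Quotient.mk 1)
  · obtain ⟨b, rfl⟩ := Submodule.mkQ_surjective L x
    rw [Submodule.mkQ_apply, ker_annMap_mk]
    exact hF.2.2.2 L hL b

end Filter

variable (Λ)

/-- **Gabriel's classification.** For a ring `Λ`, the assignment
`𝒴 ↦ {L | Λ/L ∈ 𝒴}` is a bijection from the prelocalizing subcategories of the category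
of right `Λ`-modules onto the prelocalizing filters of right ideals of `Λ`, with inverse
`ℱ ↦ {M | Ann(x) ∈ ℱ for every x ∈ M}`. -/
theorem preloc_subcat_filter_bijection :
    (∀ P : Set (ModuleCat.{u} Λᵐᵒᵖ), IsPrelocSubcat Λ P → IsPrelocFilter Λ (toFilter Λ P)) ∧
    (∀ F : Set (Submodule Λᵐᵒᵖ Λ), IsPrelocFilter Λ F → IsPrelocSubcat Λ (toSubcat Λ F)) ∧
    (∀ P : Set (ModuleCat.{u} Λᵐᵒᵖ), IsPrelocSubcat Λ P → toSubcat Λ (toFilter Λ P) = P) ∧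
    (∀ F : Set (Submodule Λᵐᵒᵖ Λ), IsPrelocFilter Λ F → toFilter Λ (toSubcat Λ F) = F) :=
  ⟨fun _ hP => hP.isPrelocFilter_toFilter, fun _ hF => hF.isPrelocSubcat_toSubcat,
    fun _ hP => hP.toSubcat_toFilter, fun _ hF => hF.toFilter_toSubcat⟩
end

section
/- Let R be a commutative noetherian ring and ℱ₁, ℱ₂ filters of ideals of R. Then the Gabriel product ℱ₁ * ℱ₂ (defined by I ∈ ℱ₁ * ℱ₂ iff there exists I₁ ∈ ℱ₁ such that a⁻¹I ∈ ℱ₂ for every a ∈ I₁) equals the set of ideals I of R such that I₁I₂ ⊆ I for some I₁ ∈ ℱ₁ and I₂ ∈ ℱ₂. -/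
/-!
If `I₁ ∈ ℱ₁` witnesses `I ∈ ℱ₁ * ℱ₂`, take `I₂ = (I : I₁)`, so that `I₁ I₂ ⊆ I`. As `R` is
noetherian, `I₁` is generated by finitely many `a₁, …, aₙ`, and `(I : I₁) = a₁⁻¹I ∩ ⋯ ∩ aₙ⁻¹I`
is a finite intersection of members of `ℱ₂`. Conversely, `I₁ I₂ ⊆ I` gives `I₂ ⊆ a⁻¹I` for every
`a ∈ I₁`, and `ℱ₂` is upward closed.
-/

namespace Submodule

variable {R M : Type*} [CommSemiring R] [AddCommMonoid M] [Module R M]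

theorem colon_mem_of_fg {F : Set (Ideal R)} (htop : ⊤ ∈ F)
    (hinf : ∀ I J : Ideal R, I ∈ F → J ∈ F → I ⊓ J ∈ F) {N P : Submodule R M} (hP : P.FG)
    (h : ∀ x ∈ P, N.colon {x} ∈ F) : N.colon P ∈ F := by
  obtain ⟨s, rfl⟩ := hP
  have hs : N.colon (s : Set M) = s.inf fun x => N.colon {x} := by
    ext r
    simp [mem_colon, mem_finsetInf]
  rw [colon_span, hs]
  exact Finset.inf_induction htop (fun I hI J hJ => hinf I J hI hJ)
    fun x hx => h x (subset_span hx)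

end Submodule

namespace Ideal

variable {R : Type*} [CommSemiring R]

theorem le_colon_iff_mul_le {I J K : Ideal R} : K ≤ I.colon J ↔ J * K ≤ I := by
  rw [mul_le, SetLike.le_def]
  simp only [Submodule.mem_colon, SetLike.mem_coe, smul_eq_mul]
  exact ⟨fun h a ha b hb => mul_comm b a ▸ h hb a ha, fun h b hb a ha => mul_comm a b ▸ h a ha b hb⟩

theorem comap_mulLeft_eq_colon (I : Ideal R) (a : R) :
    Submodule.comap (LinearMap.mulLeft R a) I = I.colon {a} := by
  ext b
  simp [mul_comm]

end Ideal

theorem gabriel_product_eq_general (R : Type*) [CommRing R] [IsNoetherianRing R]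
    (F₁ F₂ : Set (Ideal R))
    (htop₂ : ⊤ ∈ F₂) (hup₂ : ∀ I J : Ideal R, I ∈ F₂ → I ≤ J → J ∈ F₂)
    (hinf₂ : ∀ I J : Ideal R, I ∈ F₂ → J ∈ F₂ → I ⊓ J ∈ F₂) :
    {I : Ideal R | ∃ I₁ ∈ F₁, ∀ a ∈ I₁, Submodule.comap (LinearMap.mulLeft R a) I ∈ F₂}
      = {I : Ideal R | ∃ I₁ ∈ F₁, ∃ I₂ ∈ F₂, I₁ * I₂ ≤ I} := by
  ext I
  simp only [Set.mem_ofPred_eq, Ideal.comap_mulLeft_eq_colon]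
  constructor
  · rintro ⟨I₁, hI₁, h⟩
    exact ⟨I₁, hI₁, I.colon I₁,
      Submodule.colon_mem_of_fg htop₂ hinf₂ (IsNoetherian.noetherian I₁) h,
      Ideal.le_colon_iff_mul_le.1 le_rfl⟩
  · rintro ⟨I₁, hI₁, I₂, hI₂, hle⟩
    refine ⟨I₁, hI₁, fun a ha => hup₂ I₂ _ hI₂ ?_⟩
    exact (Ideal.le_colon_iff_mul_le.2 hle).trans
      (Submodule.colon_mono le_rfl (Set.singleton_subset_iff.2 ha))

/-- Let `R` be a commutative noetherian ring and `ℱ₁`, `ℱ₂` filters of ideals of `R`.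
The Gabriel product `ℱ₁ * ℱ₂ = {I | ∃ I₁ ∈ ℱ₁, ∀ a ∈ I₁, a⁻¹I ∈ ℱ₂}` equals the set of
ideals `I` such that `I₁ * I₂ ⊆ I` for some `I₁ ∈ ℱ₁` and `I₂ ∈ ℱ₂`. -/
theorem gabriel_product_eq (R : Type*) [CommRing R] [IsNoetherianRing R]
    (F₁ F₂ : Set (Ideal R))
    (htop₁ : ⊤ ∈ F₁) (hup₁ : ∀ I J : Ideal R, I ∈ F₁ → I ≤ J → J ∈ F₁)
    (hinf₁ : ∀ I J : Ideal R, I ∈ F₁ → J ∈ F₁ → I ⊓ J ∈ F₁)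
    (htop₂ : ⊤ ∈ F₂) (hup₂ : ∀ I J : Ideal R, I ∈ F₂ → I ≤ J → J ∈ F₂)
    (hinf₂ : ∀ I J : Ideal R, I ∈ F₂ → J ∈ F₂ → I ⊓ J ∈ F₂) :
    {I : Ideal R | ∃ I₁ ∈ F₁, ∀ a ∈ I₁, Submodule.comap (LinearMap.mulLeft R a) I ∈ F₂}
      = {I : Ideal R | ∃ I₁ ∈ F₁, ∃ I₂ ∈ F₂, I₁ * I₂ ≤ I} :=
  gabriel_product_eq_general R F₁ F₂ htop₂ hup₂ hinf₂
end

section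
/- Let R be a commutative noetherian ring. A filter ℱ of ideals of R is a Gabriel filter (i.e., satisfies ℱ * ℱ ⊆ ℱ for the Gabriel product) if and only if ℱ is closed under products of ideals, i.e., I₁, I₂ ∈ ℱ implies I₁I₂ ∈ ℱ. -/
/-!
If `I₁ = (a₁, …, aₙ)` and each `aᵢ⁻¹ I` lies in `ℱ`, then `J = ⋂ᵢ aᵢ⁻¹ I` lies in `ℱ` and
`I₁ J ⊆ I`, so closure under products and upward closure give `I ∈ ℱ`; noetherianity provides
the finite generating set. Conversely `I₂ ⊆ a⁻¹(I₁ I₂)` for every `a ∈ I₁`.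
-/

namespace Ideal

variable {R : Type*} [CommRing R]

theorem le_comap_mulLeft_mul {I J : Ideal R} {a : R} (ha : a ∈ I) :
    J ≤ Submodule.comap (LinearMap.mulLeft R a) (I * J) :=
  fun _ hb => mul_mem_mul ha hb

theorem span_mul_finsetInf_comap_mulLeft_le (s : Finset R) (I : Ideal R) :
    span (s : Set R) * s.inf (fun a => Submodule.comap (LinearMap.mulLeft R a) I) ≤ I := by
  refine mul_le.mpr fun r hr b hb => ?_
  have hspan : span (s : Set R) ≤ Submodule.comap (LinearMap.mulRight R b) I :=
    span_le.mpr fun a ha => Submodule.mem_finsetInf.mp hb a ha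
  exact hspan hr

end Ideal

theorem gabriel_filter_iff_closed_under_products_general (R : Type*) [CommRing R]
    [IsNoetherianRing R] (F : Set (Ideal R))
    (hup : ∀ I J : Ideal R, I ∈ F → I ≤ J → J ∈ F)
    (hinf : ∀ I J : Ideal R, I ∈ F → J ∈ F → I ⊓ J ∈ F) :
    (∀ I : Ideal R,
        (∃ I₁ ∈ F, ∀ a ∈ I₁, Submodule.comap (LinearMap.mulLeft R a) I ∈ F) → I ∈ F)
      ↔ (∀ I₁ ∈ F, ∀ I₂ ∈ F, I₁ * I₂ ∈ F) := by
  constructor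
  · intro hgabriel I₁ h₁ I₂ h₂
    exact hgabriel _ ⟨I₁, h₁, fun a ha => hup _ _ h₂ (Ideal.le_comap_mulLeft_mul ha)⟩
  · rintro hmul I ⟨I₁, h₁, hcomap⟩
    obtain ⟨s, rfl⟩ := IsNoetherian.noetherian I₁
    have hJ : s.inf (fun a => Submodule.comap (LinearMap.mulLeft R a) I) ∈ F :=
      Finset.inf_mem F (hup _ ⊤ h₁ le_top) (fun _ hK _ hL => hinf _ _ hK hL) s _
        fun a ha => hcomap a (Ideal.subset_span ha)
    exact hup _ _ (hmul _ h₁ _ hJ) (Ideal.span_mul_finsetInf_comap_mulLeft_le s I)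

/-- Let `R` be a commutative noetherian ring. A filter `ℱ` of ideals of `R` is a Gabriel
filter (i.e., `ℱ * ℱ ⊆ ℱ` for the Gabriel product) if and only if `ℱ` is closed under
products of ideals. -/
theorem gabriel_filter_iff_closed_under_products (R : Type*) [CommRing R]
    [IsNoetherianRing R] (F : Set (Ideal R))
    (htop : ⊤ ∈ F) (hup : ∀ I J : Ideal R, I ∈ F → I ≤ J → J ∈ F)
    (hinf : ∀ I J : Ideal R, I ∈ F → J ∈ F → I ⊓ J ∈ F) :
    (∀ I : Ideal R,
        (∃ I₁ ∈ F, ∀ a ∈ I₁, Submodule.comap (LinearMap.mulLeft R a) I ∈ F) → I ∈ F)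
      ↔ (∀ I₁ ∈ F, ∀ I₂ ∈ F, I₁ * I₂ ∈ F) :=
  gabriel_filter_iff_closed_under_products_general R F hup hinf
end

section
/- Let R be a commutative noetherian ring and 𝔭 a prime ideal. For every prime 𝔮 of R, the localization of the injective hull E_R(R/𝔭) at 𝔮 satisfies: (E_R(R/𝔭))_𝔮 ≠ 0 if and only if 𝔭 ⊆ 𝔮. Hence Supp E_R(R/𝔭) = {𝔮 ∈ Spec R : 𝔭 ⊆ 𝔮}. -/
/-- Let `R` be a commutative noetherian ring, `𝔭` a prime ideal, and `E` an injective hull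
of `R ⧸ 𝔭`: an injective `R`-module together with an injective linear map
`f : R ⧸ 𝔭 →ₗ[R] E` with essential image. Then for every prime `𝔮`, the localization
`E_𝔮` is nonzero if and only if `𝔭 ⊆ 𝔮`; hence `Supp E = {𝔮 ∈ Spec R | 𝔭 ⊆ 𝔮}`. -/
theorem support_injective_hull (R : Type*) [CommRing R] [IsNoetherianRing R]
    (p : Ideal R) [p.IsPrime] (E : Type*) [AddCommGroup E] [Module R E]
    (hinj : Module.Injective R E) (f : (R ⧸ p) →ₗ[R] E)
    (hf : Function.Injective f)
    (hess : ∀ N : Submodule R E, N ≠ ⊥ → N ⊓ LinearMap.range f ≠ ⊥) :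
    (∀ q : PrimeSpectrum R,
        Nontrivial (LocalizedModule q.asIdeal.primeCompl E) ↔ p ≤ q.asIdeal) ∧
      Module.support R E = {q : PrimeSpectrum R | p ≤ q.asIdeal} := by
  -- Key torsion fact: every element of `E` is annihilated by a power of each `r ∈ p`.
  have key : ∀ r ∈ p, ∀ e : E, ∃ n : ℕ, r ^ n • e = 0 := by
    intro r hr e
    haveI : IsNoetherian R R := by rwa [← isNoetherianRing_iff]
    set g : ℕ →o Ideal R :=
      ⟨fun n => LinearMap.ker (LinearMap.toSpanSingleton R E (r ^ n • e)), by
        intro n m hnm a ha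
        simp only [LinearMap.mem_ker, LinearMap.toSpanSingleton_apply] at ha ⊢
        have : r ^ m = r ^ (m - n) * r ^ n := by
          rw [← pow_add]; congr 1; omega
        rw [this, mul_smul, smul_comm a]
        rw [ha, smul_zero]⟩ with hg
    obtain ⟨N, hN⟩ := monotone_stabilizes_iff_noetherian.mpr inferInstance g
    refine ⟨N, ?_⟩
    by_contra hx
    set x : E := r ^ N • e with hxdef
    have hspan : Submodule.span R {x} ≠ ⊥ := by
      simpa [Submodule.span_singleton_eq_bot] using hx
    obtain ⟨z, hz, hz0⟩ := (Submodule.ne_bot_iff _).mp (hess _ hspan)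
    obtain ⟨hz1, hz2⟩ := Submodule.mem_inf.mp hz
    obtain ⟨s, hs⟩ := Submodule.mem_span_singleton.mp hz1
    obtain ⟨y, hy⟩ := hz2
    -- `r • y = 0` in `R ⧸ p` since `r ∈ p`.
    obtain ⟨y', rfl⟩ := Ideal.Quotient.mk_surjective y
    have hry : r • (Ideal.Quotient.mk p y') = 0 := by
      have : r • (Ideal.Quotient.mk p y') = Ideal.Quotient.mk p (r • y') :=
        (Submodule.Quotient.mk_smul p r y').symm
      rw [this, Ideal.Quotient.eq_zero_iff_mem, smul_eq_mul]
      exact p.mul_mem_right _ hr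
    have hrz : r • z = 0 := by
      rw [← hy, ← map_smul, hry, map_zero]
    -- hence `s` annihilates `r • x`, so also `x` by stabilization.
    have hs' : s ∈ LinearMap.ker (LinearMap.toSpanSingleton R E (r ^ (N + 1) • e)) := by
      simp only [LinearMap.mem_ker, LinearMap.toSpanSingleton_apply]
      have : r ^ (N + 1) • e = r • x := by
        rw [hxdef, smul_smul, ← pow_succ']
      rw [this, smul_comm, hs, hrz]
    have hgg : (LinearMap.ker (LinearMap.toSpanSingleton R E (r ^ N • e)) : Ideal R)
        = LinearMap.ker (LinearMap.toSpanSingleton R E (r ^ (N + 1) • e)) :=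
      hN (N + 1) (by omega)
    have hs'' : s ∈ LinearMap.ker (LinearMap.toSpanSingleton R E (r ^ N • e)) := by
      rw [hgg]; exact hs'
    simp only [LinearMap.mem_ker, LinearMap.toSpanSingleton_apply] at hs''
    rw [← hxdef] at hs''
    exact hz0 (hs ▸ hs'')
  have main : ∀ q : PrimeSpectrum R,
      Nontrivial (LocalizedModule q.asIdeal.primeCompl E) ↔ p ≤ q.asIdeal := by
    intro q
    constructor
    · intro hnt
      by_contra hpq
      obtain ⟨r, hrp, hrq⟩ := Set.not_subset.mp hpq
      have : Subsingleton (LocalizedModule q.asIdeal.primeCompl E) := by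
        rw [LocalizedModule.subsingleton_iff]
        intro m
        obtain ⟨n, hn⟩ := key r hrp m
        exact ⟨r ^ n, pow_mem hrq n, hn⟩
      exact (not_subsingleton_iff_nontrivial.mpr hnt) this
    · intro hpq
      set e : E := f (Ideal.Quotient.mk p 1)
      have he : LocalizedModule.mkLinearMap q.asIdeal.primeCompl E e ≠ 0 := by
        intro h
        have := LocalizedModule.mem_ker_mkLinearMap_iff.mp
          (by simpa using (LinearMap.mem_ker).mpr h)
        obtain ⟨s, hsS, hse⟩ := this
        have : s • (Ideal.Quotient.mk p (1 : R)) = 0 := by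
          apply hf
          rw [map_smul, map_zero]
          exact hse
        have hs1 : Ideal.Quotient.mk p s = 0 := by
          have h2 : s • (Ideal.Quotient.mk p (1 : R)) = Ideal.Quotient.mk p (s • (1 : R)) :=
            (Submodule.Quotient.mk_smul p s (1 : R)).symm
          rw [h2, smul_eq_mul, mul_one] at this
          exact this
        have : s ∈ p := Ideal.Quotient.eq_zero_iff_mem.mp hs1
        exact hsS (hpq this)
      exact nontrivial_of_ne _ 0 he
  refine ⟨main, ?_⟩
  ext q
  rw [Module.mem_support_iff, main q]
  rfl
end

section
/- Let R be a commutative noetherian ring and 𝔭 a prime ideal. Then the set of associated primes of the injective hull E_R(R/𝔭) is exactly {𝔭}. -/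
/-! If `𝔮 = Ann(x)` is prime and `r • x ≠ 0`, then `Ann(r • x) = 𝔮`: `s r x = 0` puts `s r` in `𝔮`,
and `r ∉ 𝔮`. Since the image of `R ⧸ 𝔭` is essential in `E`, every `x ≠ 0` has a nonzero multiple
in that image, so `Ass(E) = Ass(R ⧸ 𝔭) = {𝔭}`. -/

open Submodule

section

variable {R M N : Type*} [CommSemiring R] [AddCommMonoid M] [Module R M]
  [AddCommMonoid N] [Module R N]

theorem Submodule.colon_bot_singleton_smul_of_isPrime {x : M}
    (hx : ((⊥ : Submodule R M).colon {x}).IsPrime) {r : R} (hrx : r • x ≠ 0) :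
    (⊥ : Submodule R M).colon {r • x} = (⊥ : Submodule R M).colon {x} := by
  have hr : r ∉ (⊥ : Submodule R M).colon {x} := by
    rwa [mem_colon_singleton, mem_bot]
  ext s
  simp only [mem_colon_singleton, mem_bot]
  constructor
  · intro hs
    have hsr : s * r ∈ (⊥ : Submodule R M).colon {x} := by
      rwa [mem_colon_singleton, mem_bot, mul_smul]
    simpa only [mem_colon_singleton, mem_bot] using (hx.mem_or_mem hsr).resolve_right hr
  · intro hs
    rw [smul_comm, hs, smul_zero]

theorem Submodule.colon_bot_singleton_map_of_injective {f : N →ₗ[R] M}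
    (hf : Function.Injective f) (z : N) :
    (⊥ : Submodule R M).colon {f z} = (⊥ : Submodule R N).colon {z} := by
  ext s
  simp only [mem_colon_singleton, mem_bot, ← map_smul, map_eq_zero_iff f hf]

theorem associatedPrimes_eq_of_injective_of_essential [IsNoetherianRing R] {f : N →ₗ[R] M}
    (hf : Function.Injective f)
    (hess : ∀ K : Submodule R M, K ≠ ⊥ → K ⊓ LinearMap.range f ≠ ⊥) :
    associatedPrimes R M = associatedPrimes R N := by
  refine le_antisymm (fun q hq ↦ ?_) (associatedPrimes.subset_of_injective hf)
  obtain ⟨hq, x, rfl⟩ := isAssociatedPrime_iff.mp hq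
  have hx : x ≠ 0 := by
    rintro rfl
    exact hq.ne_top colon_singleton_zero
  have hspan : span R {x} ≠ ⊥ := by rwa [Ne, span_singleton_eq_bot]
  obtain ⟨y, ⟨hyx, z, rfl⟩, hy⟩ := exists_mem_ne_zero_of_ne_bot (hess _ hspan)
  obtain ⟨r, hr⟩ := mem_span_singleton.mp hyx
  refine isAssociatedPrime_iff.mpr ⟨hq, z, ?_⟩
  rw [← colon_bot_singleton_map_of_injective hf, ← hr,
    colon_bot_singleton_smul_of_isPrime hq (hr ▸ hy)]

end

theorem associatedPrimes_injective_hull_general (R : Type*) [CommRing R] [IsNoetherianRing R]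
    (p : Ideal R) [p.IsPrime] (E : Type*) [AddCommGroup E] [Module R E]
    (f : (R ⧸ p) →ₗ[R] E)
    (hf : Function.Injective f)
    (hess : ∀ N : Submodule R E, N ≠ ⊥ → N ⊓ LinearMap.range f ≠ ⊥) :
    associatedPrimes R E = {p} := by
  rw [associatedPrimes_eq_of_injective_of_essential hf hess,
    associatedPrimes.eq_singleton_of_isPrimary ‹p.IsPrime›.isPrimary,
    ‹p.IsPrime›.radical]

/-- Let `R` be a commutative noetherian ring, `𝔭` a prime ideal, and `E` an injective hull
of `R ⧸ 𝔭`: an injective `R`-module together with an injective linear map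
`f : R ⧸ 𝔭 →ₗ[R] E` with essential image. Then the set of associated primes of `E` is
exactly `{𝔭}`. -/
theorem associatedPrimes_injective_hull (R : Type*) [CommRing R] [IsNoetherianRing R]
    (p : Ideal R) [p.IsPrime] (E : Type*) [AddCommGroup E] [Module R E]
    (hinj : Module.Injective R E) (f : (R ⧸ p) →ₗ[R] E)
    (hf : Function.Injective f)
    (hess : ∀ N : Submodule R E, N ≠ ⊥ → N ⊓ LinearMap.range f ≠ ⊥) :
    associatedPrimes R E = {p} :=
  associatedPrimes_injective_hull_general R p E f hf hess
end
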